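/- Let U : ℝ² → ℝ be a bounded C¹ function that is weakly subharmonic, i.e. ∫_{ℝ²} ⟨∇U, ∇ψ⟩ dx ≤ 0 for every nonnegative smooth compactly supported function ψ on ℝ². Then U is constant. -/

import Mathlib

/-!
Test weak subharmonicity against `ψ = η² (U + B)`, where `|U| ≤ B` and `η ≥ 0` is a cutoff;
absorbing the cross term gives the Caccioppoli inequality `∫ η² |∇U|² ≤ 16 B² ∫ |∇η|²`.
In the plane the Dirichlet energy is scale invariant, so the sum `η_N` of `N` bumps at the
dyadic scales `4 ^ k`, whose gradients live on disjoint annuli, has energy `O(N)` while it is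
`≥ n` on the ball of radius `4 ^ j` once `N = j + n`. Hence `n² ∫_{B(4^j)} |∇U|² = O(n)`, so
`∇U = 0`. The test function `η² (U + B)` is only `C¹`; it is admissible after mollification.
-/

open MeasureTheory Metric Filter Topology ContinuousLinearMap Module
open scoped Convolution ContDiff

def IsWeaklySubharmonic {E : Type*} [NormedAddCommGroup E] [InnerProductSpace ℝ E]
    [CompleteSpace E] [MeasurableSpace E] (n : ℕ∞) (μ : Measure E) (U : E → ℝ) : Prop :=
  ∀ ψ : E → ℝ, ContDiff ℝ n ψ → HasCompactSupport ψ → (∀ x, 0 ≤ ψ x) →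
    ∫ x, inner ℝ (gradient U x) (gradient ψ x) ∂μ ≤ 0

section Caccioppoli

variable {E : Type*} [NormedAddCommGroup E] [InnerProductSpace ℝ E] [CompleteSpace E]

theorem ContDiff.continuous_gradient {f : E → ℝ} (hf : ContDiff ℝ 1 f) :
    Continuous (gradient f) :=
  (InnerProductSpace.toDual ℝ E).symm.continuous.comp (hf.continuous_fderiv one_ne_zero)

theorem HasCompactSupport.gradient {f : E → ℝ} (hf : HasCompactSupport f) :
    HasCompactSupport (gradient f) :=
  (hf.fderiv ℝ).comp_left (map_zero _)

theorem fderiv_sq_mul_add_const_apply_gradient {U η : E → ℝ} {x : E}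
    (hU : DifferentiableAt ℝ U x) (hη : DifferentiableAt ℝ η x) (B : ℝ) :
    fderiv ℝ (fun y => η y ^ 2 * (U y + B)) x (gradient U x) =
      η x ^ 2 * ‖gradient U x‖ ^ 2 + 2 * η x * (U x + B) * fderiv ℝ η x (gradient U x) := by
  have hUU : fderiv ℝ U x (gradient U x) = ‖gradient U x‖ ^ 2 := by
    rw [← inner_gradient_left, real_inner_self_eq_norm_sq]
  rw [((hη.hasFDerivAt.pow 2).fun_mul (hU.hasFDerivAt.add_const B)).fderiv]
  simp only [add_apply, smul_apply, smul_eq_mul, hUU]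
  ring

variable [MeasurableSpace E] [OpensMeasurableSpace E] {μ : Measure E}
  [IsFiniteMeasureOnCompacts μ]

theorem IsWeaklySubharmonic.integral_sq_mul_norm_gradient_sq_le {U : E → ℝ} {B : ℝ}
    (h : IsWeaklySubharmonic 1 μ U) (hU : ContDiff ℝ 1 U) (hB : ∀ x, |U x| ≤ B)
    {η : E → ℝ} (hη : ContDiff ℝ 1 η) (hηc : HasCompactSupport η) (hηn : ∀ x, 0 ≤ η x) :
    ∫ x, η x ^ 2 * ‖gradient U x‖ ^ 2 ∂μ ≤ 16 * B ^ 2 * ∫ x, ‖fderiv ℝ η x‖ ^ 2 ∂μ := by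
  set ψ := fun x => η x ^ 2 * (U x + B)
  have hψη : Function.support ψ ⊆ Function.support η := fun x hx => by
    contrapose! hx
    simp [ψ, Function.notMem_support.1 hx]
  have hψ : ContDiff ℝ 1 ψ := (hη.pow 2).mul (hU.add contDiff_const)
  have hψn (x : E) : 0 ≤ ψ x := mul_nonneg (sq_nonneg _) (by linarith [(abs_le.1 (hB x)).1])
  have hpoint (x : E) : η x ^ 2 * ‖gradient U x‖ ^ 2 / 2 - 8 * B ^ 2 * ‖fderiv ℝ η x‖ ^ 2 ≤
      inner ℝ (gradient U x) (gradient ψ x) := by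
    rw [inner_gradient_right, conj_trivial, fderiv_sq_mul_add_const_apply_gradient
      (hU.differentiable one_ne_zero x) (hη.differentiable one_ne_zero x)]
    obtain ⟨hUB, hUB'⟩ := abs_le.1 (hB x)
    have hD := neg_le_of_abs_le (le_opNorm (fderiv ℝ η x) (gradient U x))
    have hηDg : 0 ≤ η x * ‖fderiv ℝ η x‖ * ‖gradient U x‖ := by have := hηn x; positivity
    have hcross : -(2 * η x * (U x + B) * (‖fderiv ℝ η x‖ * ‖gradient U x‖)) ≤
        2 * η x * (U x + B) * fderiv ℝ η x (gradient U x) := by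
      nlinarith [mul_le_mul_of_nonneg_left hD (by nlinarith [hηn x] : 0 ≤ 2 * η x * (U x + B))]
    -- `4 B a b ≤ a² / 2 + 8 B² b²` with `a = η |∇U|` and `b = |∇η|`
    nlinarith [sq_nonneg (η x * ‖gradient U x‖ - 4 * B * ‖fderiv ℝ η x‖),
      mul_le_mul_of_nonneg_left (by linarith : U x + B ≤ 2 * B) hηDg]
  have hint₁ : Integrable (fun x => η x ^ 2 * ‖gradient U x‖ ^ 2) μ :=
    ((hη.continuous.pow 2).mul (hU.continuous_gradient.norm.pow 2)).integrable_of_hasCompactSupport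
      (hηc.mono fun x hx h0 => hx (by simp [h0]))
  have hint₂ : Integrable (fun x => ‖fderiv ℝ η x‖ ^ 2) μ :=
    ((hη.continuous_fderiv one_ne_zero).norm.pow 2).integrable_of_hasCompactSupport
      ((hηc.fderiv ℝ).mono fun x hx h0 => hx (by simp [h0]))
  have hint₃ : Integrable (fun x => inner ℝ (gradient U x) (gradient ψ x)) μ :=
    (hU.continuous_gradient.inner hψ.continuous_gradient).integrable_of_hasCompactSupport
      ((hηc.mono hψη).gradient.mono fun x hx h0 => hx (by simp [h0]))
  have hmono : ∫ x, (η x ^ 2 * ‖gradient U x‖ ^ 2 / 2 - 8 * B ^ 2 * ‖fderiv ℝ η x‖ ^ 2) ∂μ ≤ 0 :=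
    (integral_mono ((hint₁.div_const 2).sub (hint₂.const_mul _)) hint₃ hpoint).trans
      (h ψ hψ (hηc.mono hψη) hψn)
  rw [integral_sub (hint₁.div_const 2) (hint₂.const_mul _), integral_div, integral_const_mul]
    at hmono
  linarith

end Caccioppoli

section Mollification

variable {E F : Type*} [NormedAddCommGroup E] [NormedSpace ℝ E] [FiniteDimensional ℝ E]
  [MeasurableSpace E] [BorelSpace E] {μ : Measure E} [μ.IsAddHaarMeasure]
  [NormedAddCommGroup F] [NormedSpace ℝ F]

theorem HasCompactSupport.fderiv_convolution_lsmul {f : E → ℝ} {g : E → F}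
    (hf : LocallyIntegrable f μ) (hcg : HasCompactSupport g) (hg : ContDiff ℝ 1 g) (x : E) :
    fderiv ℝ (f ⋆[lsmul ℝ ℝ, μ] g) x = (f ⋆[lsmul ℝ ℝ, μ] fderiv ℝ g) x := by
  rw [(hcg.hasFDerivAt_convolution_right _ hf hg x).fderiv, convolution_def, convolution_def]
  rfl

theorem ContDiffBump.norm_normed_convolution_le (φ : ContDiffBump (0 : E)) {g : E → F} {C : ℝ}
    (hg : ∀ x, ‖g x‖ ≤ C) (x : E) : ‖(φ.normed μ ⋆[lsmul ℝ ℝ, μ] g) x‖ ≤ C := by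
  rw [convolution_def]
  calc ‖∫ t, lsmul ℝ ℝ (φ.normed μ t) (g (x - t)) ∂μ‖ ≤ ∫ t, φ.normed μ t * C ∂μ := by
        refine norm_integral_le_of_norm_le (φ.integrable_normed.mul_const C)
          (Eventually.of_forall fun t => ?_)
        rw [lsmul_apply, norm_smul, Real.norm_of_nonneg (φ.nonneg_normed t)]
        exact mul_le_mul_of_nonneg_left (hg _) (φ.nonneg_normed t)
    _ = C := by rw [integral_mul_const, φ.integral_normed, one_mul]

variable [CompleteSpace F]

theorem ContDiffBump.normed_convolution_eq_zero_of_notMem_cthickening (φ : ContDiffBump (0 : E))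
    {g : E → F} {r : ℝ} (hr : φ.rOut ≤ r) {x : E} (hx : x ∉ cthickening r (tsupport g)) :
    (φ.normed μ ⋆[lsmul ℝ ℝ, μ] g) x = 0 := by
  have hball (y : E) (hy : y ∈ ball x φ.rOut) : g y = 0 :=
    image_eq_zero_of_notMem_tsupport fun hy' =>
      hx (mem_cthickening_of_dist_le x y r _ hy' ((mem_ball'.1 hy).le.trans hr))
  have hx₀ := hball x (mem_ball_self φ.rOut_pos)
  rw [φ.normed_convolution_eq_right fun y hy => by rw [hball y hy, hx₀], hx₀]

end Mollification

theorem IsWeaklySubharmonic.one_of_top {E : Type*} [NormedAddCommGroup E]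
    [InnerProductSpace ℝ E] [FiniteDimensional ℝ E] [MeasurableSpace E] [BorelSpace E]
    {μ : Measure E} [μ.IsAddHaarMeasure] {U : E → ℝ} (h : IsWeaklySubharmonic ⊤ μ U)
    (hU : LocallyIntegrable (gradient U) μ) : IsWeaklySubharmonic 1 μ U := by
  intro ψ hψ hψc hψn
  let φ (n : ℕ) : ContDiffBump (0 : E) :=
    ⟨1 / (n + 2), 1 / (n + 1), by positivity, by gcongr; linarith⟩
  let ψs (n : ℕ) : E → ℝ := (φ n).normed μ ⋆[lsmul ℝ ℝ, μ] ψ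
  have hφ : Tendsto (fun n => (φ n).rOut) atTop (𝓝 0) := tendsto_one_div_add_atTop_nhds_zero_nat
  have hφ₁ (n : ℕ) : (φ n).rOut ≤ 1 :=
    div_le_one_of_le₀ (by linarith [n.cast_nonneg (α := ℝ)]) (by positivity)
  have hDψ : Continuous (fderiv ℝ ψ) := hψ.continuous_fderiv one_ne_zero
  have hDψs (n : ℕ) (x : E) :
      fderiv ℝ (ψs n) x = ((φ n).normed μ ⋆[lsmul ℝ ℝ, μ] fderiv ℝ ψ) x :=
    hψc.fderiv_convolution_lsmul (φ n).integrable_normed.locallyIntegrable hψ x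
  have hψs (n : ℕ) : ContDiff ℝ ∞ (ψs n) :=
    (φ n).hasCompactSupport_normed.contDiff_convolution_left _ (φ n).contDiff_normed
      hψ.continuous.locallyIntegrable
  obtain ⟨C, hC⟩ := hDψ.bounded_above_of_compact_support (hψc.fderiv ℝ)
  set K := cthickening 1 (tsupport (fderiv ℝ ψ))
  have hK : IsCompact K := (hψc.fderiv ℝ).isCompact.cthickening
  have hlim : Tendsto (fun n => ∫ x, fderiv ℝ (ψs n) x (gradient U x) ∂μ) atTop
      (𝓝 (∫ x, fderiv ℝ ψ x (gradient U x) ∂μ)) := by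
    refine tendsto_integral_of_dominated_convergence
      (K.indicator fun x => C * ‖gradient U x‖) (fun n => ?_) ?_ (fun n => ?_) ?_
    · exact isBoundedBilinearMap_apply.continuous.comp_aestronglyMeasurable₂
        ((hψs n).continuous_fderiv (by simp)).aestronglyMeasurable hU.aestronglyMeasurable
    · rw [integrable_indicator_iff hK.measurableSet]
      exact (hU.integrableOn_isCompact hK).norm.const_mul _
    · filter_upwards with x
      by_cases hx : x ∈ K
      · rw [Set.indicator_of_mem hx, hDψs]
        exact (le_opNorm _ _).trans (by gcongr; exact (φ n).norm_normed_convolution_le hC x)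
      · simp [hDψs, (φ n).normed_convolution_eq_zero_of_notMem_cthickening (hφ₁ n) hx,
          Set.indicator_of_notMem hx]
    · filter_upwards with x
      simp only [hDψs]
      exact ((apply ℝ ℝ (gradient U x)).continuous.tendsto _).comp
        (ContDiffBump.convolution_tendsto_right_of_continuous hφ hDψ x)
  simp only [IsWeaklySubharmonic, inner_gradient_right, conj_trivial] at h ⊢
  exact le_of_tendsto' hlim fun n => h _ (hψs n)
    ((φ n).hasCompactSupport_normed.convolution _ hψc) fun x =>
      integral_nonneg fun t => smul_nonneg ((φ n).nonneg_normed t) (hψn _)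

theorem ContDiffBump.rIn_lt_dist_lt_rOut_of_fderiv_ne_zero {E : Type*} [NormedAddCommGroup E]
    [NormedSpace ℝ E] [HasContDiffBump E] {c x : E} (φ : ContDiffBump c)
    (h : fderiv ℝ φ x ≠ 0) : φ.rIn < dist x c ∧ dist x c < φ.rOut := by
  constructor
  · by_contra! hx
    have hmax : IsLocalMax φ x := Eventually.of_forall fun y =>
      φ.le_one.trans_eq (φ.one_of_mem_closedBall hx).symm
    exact h hmax.fderiv_eq_zero
  · by_contra! hx
    have hmin : IsLocalMin φ x := Eventually.of_forall fun y =>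
      (φ.zero_of_le_dist hx).trans_le φ.nonneg
    exact h hmin.fderiv_eq_zero

theorem integral_norm_fderiv_comp_smul_sq {E F : Type*} [NormedAddCommGroup E] [NormedSpace ℝ E]
    [FiniteDimensional ℝ E] [MeasurableSpace E] [BorelSpace E] (μ : Measure E)
    [μ.IsAddHaarMeasure] [NormedAddCommGroup F] [NormedSpace ℝ F] (hE : finrank ℝ E = 2)
    (f : E → F) {c : ℝ} (hc : c ≠ 0) :
    ∫ x, ‖fderiv ℝ (fun y => f (c • y)) x‖ ^ 2 ∂μ = ∫ x, ‖fderiv ℝ f x‖ ^ 2 ∂μ := by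
  simp_rw [fderiv_comp_smul, norm_smul, mul_pow]
  rw [integral_const_mul, Measure.integral_comp_smul μ (fun x => ‖fderiv ℝ f x‖ ^ 2), hE,
    smul_eq_mul, ← mul_assoc, Real.norm_eq_abs, sq_abs, abs_of_pos (by positivity),
    mul_inv_cancel₀ (by positivity), one_mul]

section LogCutoff

variable {E : Type*} [NormedAddCommGroup E] [NormedSpace ℝ E]

theorem norm_inv_four_pow_smul (k : ℕ) (x : E) : ‖((4 : ℝ) ^ k)⁻¹ • x‖ = ‖x‖ / 4 ^ k := by
  rw [norm_smul, norm_inv, norm_pow, Real.norm_ofNat, inv_mul_eq_div]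

variable [FiniteDimensional ℝ E]

variable (E) in
noncomputable def unitBump : ContDiffBump (0 : E) := ⟨1, 2, one_pos, one_lt_two⟩

noncomputable def dyadicBump (k : ℕ) : E → ℝ := fun x => unitBump E (((4 : ℝ) ^ k)⁻¹ • x)

theorem contDiff_dyadicBump (k : ℕ) : ContDiff ℝ ∞ (dyadicBump (E := E) k) :=
  (unitBump E).contDiff.comp (contDiff_const_smul _)

theorem hasCompactSupport_dyadicBump (k : ℕ) : HasCompactSupport (dyadicBump (E := E) k) :=
  (unitBump E).hasCompactSupport.comp_smul (by positivity)

theorem dyadicBump_nonneg (k : ℕ) (x : E) : 0 ≤ dyadicBump k x := (unitBump E).nonneg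

theorem dyadicBump_eq_one {k : ℕ} {x : E} (hx : ‖x‖ ≤ 4 ^ k) : dyadicBump k x = 1 :=
  (unitBump E).one_of_mem_closedBall <| by
    rw [mem_closedBall_zero_iff, norm_inv_four_pow_smul]
    exact (div_le_one (by positivity)).2 hx

theorem dyadicBump_eq_zero {k : ℕ} {x : E} (hx : 2 * 4 ^ k ≤ ‖x‖) : dyadicBump k x = 0 :=
  (unitBump E).zero_of_le_dist <| by
    rw [dist_zero_right, norm_inv_four_pow_smul]
    exact (le_div_iff₀ (by positivity)).2 hx

theorem lt_norm_lt_of_fderiv_dyadicBump_ne_zero {k : ℕ} {x : E}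
    (h : fderiv ℝ (dyadicBump k) x ≠ 0) : 4 ^ k < ‖x‖ ∧ ‖x‖ < 2 * 4 ^ k := by
  unfold dyadicBump at h
  rw [fderiv_comp_smul] at h
  have := (unitBump E).rIn_lt_dist_lt_rOut_of_fderiv_ne_zero (right_ne_zero_of_smul h)
  rw [dist_zero_right, norm_inv_four_pow_smul, lt_div_iff₀ (by positivity),
    div_lt_iff₀ (by positivity)] at this
  exact ⟨by simpa [unitBump] using this.1, by simpa [unitBump] using this.2⟩

theorem fderiv_dyadicBump_eq_zero_of_ne {j k : ℕ} (hjk : j ≠ k) {x : E}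
    (hj : fderiv ℝ (dyadicBump j) x ≠ 0) : fderiv ℝ (dyadicBump k) x = 0 := by
  by_contra hk
  have h₁ := lt_norm_lt_of_fderiv_dyadicBump_ne_zero hj
  have h₂ := lt_norm_lt_of_fderiv_dyadicBump_ne_zero hk
  rcases hjk.lt_or_gt with hlt | hlt
  · have : (4 : ℝ) ^ (j + 1) ≤ 4 ^ k := pow_le_pow_right₀ (by norm_num) hlt
    rw [pow_succ] at this
    linarith
  · have : (4 : ℝ) ^ (k + 1) ≤ 4 ^ j := pow_le_pow_right₀ (by norm_num) hlt
    rw [pow_succ] at this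
    linarith

/-- A smooth substitute for the logarithmic cutoff `x ↦ min N (max 0 (N - log₄ ‖x‖))`. -/
noncomputable def logCutoff (N : ℕ) : E → ℝ := fun x => ∑ k ∈ Finset.range N, dyadicBump k x

theorem contDiff_logCutoff (N : ℕ) : ContDiff ℝ ∞ (logCutoff (E := E) N) :=
  ContDiff.sum fun k _ => contDiff_dyadicBump k

theorem hasCompactSupport_logCutoff (N : ℕ) : HasCompactSupport (logCutoff (E := E) N) := by
  refine HasCompactSupport.intro (isCompact_closedBall 0 (2 * 4 ^ N)) fun x hx =>
    Finset.sum_eq_zero fun k hk => dyadicBump_eq_zero ?_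
  rw [mem_closedBall_zero_iff, not_le] at hx
  have : (4 : ℝ) ^ k ≤ 4 ^ N := pow_le_pow_right₀ (by norm_num) (Finset.mem_range.1 hk).le
  linarith

theorem logCutoff_nonneg (N : ℕ) (x : E) : 0 ≤ logCutoff N x :=
  Finset.sum_nonneg fun k _ => dyadicBump_nonneg k x

theorem le_logCutoff_add {j : ℕ} (n : ℕ) {x : E} (hx : ‖x‖ ≤ 4 ^ j) :
    (n : ℝ) ≤ logCutoff (j + n) x := by
  have hone (i : ℕ) : dyadicBump (j + i) x = 1 :=
    dyadicBump_eq_one (hx.trans (pow_le_pow_right₀ (by norm_num) (Nat.le_add_right j i)))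
  rw [logCutoff, Finset.sum_range_add]
  simp only [hone, Finset.sum_const, Finset.card_range, nsmul_eq_mul, mul_one,
    le_add_iff_nonneg_left]
  exact Finset.sum_nonneg fun k _ => dyadicBump_nonneg k x

theorem norm_fderiv_logCutoff_sq_le (N : ℕ) (x : E) :
    ‖fderiv ℝ (logCutoff N) x‖ ^ 2 ≤ ∑ k ∈ Finset.range N, ‖fderiv ℝ (dyadicBump k) x‖ ^ 2 := by
  have hsum : fderiv ℝ (logCutoff N) x = ∑ k ∈ Finset.range N, fderiv ℝ (dyadicBump k) x :=
    fderiv_fun_sum fun k _ => (contDiff_dyadicBump k).differentiable (by simp) x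
  by_cases h : ∃ k ∈ Finset.range N, fderiv ℝ (dyadicBump k) x ≠ 0
  · obtain ⟨k, hk, hne⟩ := h
    rw [hsum, Finset.sum_eq_single_of_mem k hk fun j _ hjk =>
      fderiv_dyadicBump_eq_zero_of_ne hjk.symm hne]
    exact Finset.single_le_sum (f := fun k => ‖fderiv ℝ (dyadicBump k) x‖ ^ 2)
      (fun _ _ => by positivity) hk
  · push Not at h
    rw [hsum, Finset.sum_eq_zero h, norm_zero, sq, zero_mul]
    positivity

variable [MeasurableSpace E] [BorelSpace E] (μ : Measure E) [μ.IsAddHaarMeasure]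

theorem integral_norm_fderiv_logCutoff_sq_le (hE : finrank ℝ E = 2) (N : ℕ) :
    ∫ x, ‖fderiv ℝ (logCutoff N) x‖ ^ 2 ∂μ ≤ N * ∫ x, ‖fderiv ℝ (unitBump E) x‖ ^ 2 ∂μ := by
  have hint (k : ℕ) : Integrable (fun x => ‖fderiv ℝ (dyadicBump (E := E) k) x‖ ^ 2) μ :=
    (((contDiff_dyadicBump k).continuous_fderiv (by simp)).norm.pow 2
      ).integrable_of_hasCompactSupport
        (((hasCompactSupport_dyadicBump k).fderiv ℝ).mono fun x hx h0 => hx (by simp [h0]))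
  have hscale (k : ℕ) : ∫ x, ‖fderiv ℝ (dyadicBump k) x‖ ^ 2 ∂μ =
      ∫ x, ‖fderiv ℝ (unitBump E) x‖ ^ 2 ∂μ :=
    integral_norm_fderiv_comp_smul_sq μ hE _ (by positivity)
  calc ∫ x, ‖fderiv ℝ (logCutoff N) x‖ ^ 2 ∂μ
      ≤ ∫ x, ∑ k ∈ Finset.range N, ‖fderiv ℝ (dyadicBump k) x‖ ^ 2 ∂μ :=
        integral_mono_of_nonneg (Eventually.of_forall fun _ => by positivity)
          (integrable_finsetSum _ fun k _ => hint k)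
          (Eventually.of_forall (norm_fderiv_logCutoff_sq_le N))
    _ = ∑ k ∈ Finset.range N, ∫ x, ‖fderiv ℝ (dyadicBump k) x‖ ^ 2 ∂μ :=
        integral_finsetSum _ fun k _ => hint k
    _ = N * ∫ x, ‖fderiv ℝ (unitBump E) x‖ ^ 2 ∂μ := by
        simp only [hscale, Finset.sum_const, Finset.card_range, nsmul_eq_mul]

end LogCutoff

theorem nonpos_of_forall_nat_sq_mul_le {a b c : ℝ} (h : ∀ n : ℕ, (n : ℝ) ^ 2 * a ≤ b * n + c) :
    a ≤ 0 := by
  by_contra! ha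
  obtain ⟨n, hn⟩ := exists_nat_gt ((|b| + |c|) / a + 1)
  have h₁ : |b| + |c| < n * a := by rw [← div_lt_iff₀ ha]; linarith
  have h₂ : (1 : ℝ) ≤ n := by
    linarith [div_nonneg (add_nonneg (abs_nonneg b) (abs_nonneg c)) ha.le]
  nlinarith [h n, le_abs_self b, le_abs_self c, abs_nonneg c]

section Liouville

variable {E : Type*} [NormedAddCommGroup E] [InnerProductSpace ℝ E] [FiniteDimensional ℝ E]
  [MeasurableSpace E] [BorelSpace E] {μ : Measure E} [μ.IsAddHaarMeasure] {U : E → ℝ} {B : ℝ}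

theorem IsWeaklySubharmonic.sq_mul_setIntegral_norm_gradient_sq_le (hE : finrank ℝ E = 2)
    (h : IsWeaklySubharmonic 1 μ U) (hU : ContDiff ℝ 1 U) (hB : ∀ x, |U x| ≤ B) (j n : ℕ) :
    (n : ℝ) ^ 2 * ∫ x in ball 0 (4 ^ j), ‖gradient U x‖ ^ 2 ∂μ ≤
      16 * B ^ 2 * ((j + n : ℕ) * ∫ x, ‖fderiv ℝ (unitBump E) x‖ ^ 2 ∂μ) := by
  have hf : Continuous fun x => ‖gradient U x‖ ^ 2 := hU.continuous_gradient.norm.pow 2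
  have hfint : IntegrableOn (fun x => ‖gradient U x‖ ^ 2) (ball 0 (4 ^ j)) μ :=
    (hf.locallyIntegrable.integrableOn_isCompact (isCompact_closedBall 0 _)).mono_set
      ball_subset_closedBall
  have hint : Integrable (fun x => logCutoff (j + n) x ^ 2 * ‖gradient U x‖ ^ 2) μ :=
    (((contDiff_logCutoff _).continuous.pow 2).mul hf).integrable_of_hasCompactSupport
      ((hasCompactSupport_logCutoff (j + n)).mono fun x hx h0 => hx (by simp [h0]))
  calc (n : ℝ) ^ 2 * ∫ x in ball 0 (4 ^ j), ‖gradient U x‖ ^ 2 ∂μ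
      = ∫ x in ball 0 (4 ^ j), (n : ℝ) ^ 2 * ‖gradient U x‖ ^ 2 ∂μ :=
        (integral_const_mul _ _).symm
    _ ≤ ∫ x in ball 0 (4 ^ j), logCutoff (j + n) x ^ 2 * ‖gradient U x‖ ^ 2 ∂μ :=
        setIntegral_mono_on (hfint.const_mul _) hint.integrableOn measurableSet_ball
          fun x hx => by gcongr; exact le_logCutoff_add n (mem_ball_zero_iff.1 hx).le
    _ ≤ ∫ x, logCutoff (j + n) x ^ 2 * ‖gradient U x‖ ^ 2 ∂μ :=
        setIntegral_le_integral hint (Eventually.of_forall fun _ => by positivity)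
    _ ≤ 16 * B ^ 2 * ∫ x, ‖fderiv ℝ (logCutoff (j + n)) x‖ ^ 2 ∂μ :=
        h.integral_sq_mul_norm_gradient_sq_le hU hB ((contDiff_logCutoff _).of_le (by simp))
          (hasCompactSupport_logCutoff _) (logCutoff_nonneg _)
    _ ≤ 16 * B ^ 2 * ((j + n : ℕ) * ∫ x, ‖fderiv ℝ (unitBump E) x‖ ^ 2 ∂μ) := by
        gcongr
        exact integral_norm_fderiv_logCutoff_sq_le μ hE _

theorem IsWeaklySubharmonic.gradient_eq_zero (hE : finrank ℝ E = 2)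
    (h : IsWeaklySubharmonic 1 μ U) (hU : ContDiff ℝ 1 U) (hB : ∀ x, |U x| ≤ B) (x₀ : E) :
    gradient U x₀ = 0 := by
  obtain ⟨j, hj⟩ := pow_unbounded_of_one_lt ‖x₀‖ (by norm_num : (1 : ℝ) < 4)
  have hf : Continuous fun x => ‖gradient U x‖ ^ 2 := hU.continuous_gradient.norm.pow 2
  set I := ∫ x, ‖fderiv ℝ (unitBump E) x‖ ^ 2 ∂μ
  have hT : ∫ x in ball 0 (4 ^ j), ‖gradient U x‖ ^ 2 ∂μ = 0 := by
    refine le_antisymm ?_ (setIntegral_nonneg measurableSet_ball fun _ _ => by positivity)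
    refine nonpos_of_forall_nat_sq_mul_le (b := 16 * B ^ 2 * I) (c := 16 * B ^ 2 * I * j)
      fun n => ?_
    have := h.sq_mul_setIntegral_norm_gradient_sq_le hE hU hB j n
    push_cast at this
    linarith
  have hae := (setIntegral_eq_zero_iff_of_nonneg_ae (Eventually.of_forall fun _ => by positivity)
    ((hf.locallyIntegrable.integrableOn_isCompact (isCompact_closedBall 0 _)).mono_set
      ball_subset_closedBall)).1 hT
  simpa using Measure.eqOn_open_of_ae_eq hae isOpen_ball hf.continuousOn continuousOn_const
    (mem_ball_zero_iff.2 hj)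

end Liouville

/-- Liouville theorem for bounded weakly subharmonic functions on `ℝ²`.
Let `U : ℝ² → ℝ` be a bounded `C¹` function that is weakly subharmonic, i.e.
`∫_{ℝ²} ⟪∇U, ∇ψ⟫ ≤ 0` for every nonnegative smooth compactly supported `ψ`.
Then `U` is constant. -/
theorem liouville_bounded_subharmonic
    (U : EuclideanSpace ℝ (Fin 2) → ℝ)
    (hU : ContDiff ℝ 1 U)
    (hbdd : ∃ B : ℝ, ∀ x, |U x| ≤ B)
    (hsub : ∀ ψ : EuclideanSpace ℝ (Fin 2) → ℝ,
      ContDiff ℝ (⊤ : ℕ∞) ψ → HasCompactSupport ψ → (∀ x, 0 ≤ ψ x) →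
      ∫ x, (inner ℝ (gradient U x) (gradient ψ x) : ℝ) ≤ 0) :
    ∀ x y, U x = U y := by
  obtain ⟨B, hB⟩ := hbdd
  have hsub₁ : IsWeaklySubharmonic 1 volume U :=
    IsWeaklySubharmonic.one_of_top hsub hU.continuous_gradient.locallyIntegrable
  have hgrad (x) : gradient U x = 0 := hsub₁.gradient_eq_zero finrank_euclideanSpace_fin hU hB x
  have hfderiv (x) : fderiv ℝ U x = 0 := by
    simpa using congrArg (InnerProductSpace.toDual ℝ _) (hgrad x)
  exact is_const_of_fderiv_eq_zero (hU.differentiable one_ne_zero) hfderiv
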